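/- Let H be a graph on n vertices with no odd cycle (i.e., H is bipartite), and let G = W(H) be its whisker graph. Then for every q with 1 ≤ q ≤ ν(G), the complex MF^q(G) is pure: all facets (maximal faces) have the same cardinality (namely n + q − 1). -/

import Mathlib

variable {V : Type*}

/-- `M` is a set of pairwise disjoint edges of `G` with all endpoints in `F`. -/
def IsMatchingOn (G : SimpleGraph V) (F : Finset V) (M : Finset (Sym2 V)) : Prop :=
  (∀ e ∈ M, e ∈ G.edgeSet) ∧
  (∀ e ∈ M, ∀ v ∈ e, v ∈ F) ∧
  (∀ e ∈ M, ∀ e' ∈ M, e ≠ e' → ∀ v ∈ e, v ∉ e')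

/-- `F` is a face of the `q`-matching-free complex `MF^q(G)`. -/
def MFFace (G : SimpleGraph V) (q : ℕ) (F : Finset V) : Prop :=
  ¬ ∃ M : Finset (Sym2 V), IsMatchingOn G F M ∧ M.card = q

/-- `F` is a facet (maximal face) of the complex with face predicate `faces`. -/
def IsFacet (faces : Finset V → Prop) (F : Finset V) : Prop :=
  faces F ∧ ∀ F', faces F' → F ⊆ F' → F = F'

/-- Even-connection of `u` and `v` with respect to the pairwise disjoint edges in `M`. -/
def EvenConnected (G : SimpleGraph V) (M : Finset (Sym2 V)) (u v : V) : Prop :=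
  ∃ (r : ℕ) (p : ℕ → V), 1 ≤ r ∧ p 0 = u ∧ p (2 * r + 1) = v ∧
    (∀ k, k ≤ 2 * r → G.Adj (p k) (p (k + 1))) ∧
    (∀ k, k < r → s(p (2 * k + 1), p (2 * k + 2)) ∈ M) ∧
    (∀ k l, k < r → l < r →
      s(p (2 * k + 1), p (2 * k + 2)) = s(p (2 * l + 1), p (2 * l + 2)) → k = l)

/-- The set of vertices covered by the edges in `M`. -/
def mSupp (M : Finset (Sym2 V)) : Set V := {v | ∃ e ∈ M, v ∈ e}

/-- The even-connection graph `G^{e₁⋯e_q}` (vertices covered by `M` are isolated). -/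
def evenConnGraph (G : SimpleGraph V) (M : Finset (Sym2 V)) : SimpleGraph V where
  Adj x y := x ≠ y ∧ x ∉ mSupp M ∧ y ∉ mSupp M ∧
    (G.Adj x y ∨ EvenConnected G M x y ∨ EvenConnected G M y x)
  symm := by
    constructor
    rintro x y ⟨hne, hx, hy, h⟩
    refine ⟨hne.symm, hy, hx, ?_⟩
    rcases h with h | h | h
    · exact Or.inl h.symm
    · exact Or.inr (Or.inr h)
    · exact Or.inr (Or.inl h)
  loopless := ⟨fun x h => h.1 rfl⟩

/-- Delete a set of vertices from a graph (keeping them as isolated vertices). -/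
def delSet (G : SimpleGraph V) (S : Set V) : SimpleGraph V where
  Adj x y := G.Adj x y ∧ x ∉ S ∧ y ∉ S
  symm := ⟨fun x y ⟨h, hx, hy⟩ => ⟨h.symm, hy, hx⟩⟩
  loopless := ⟨fun x ⟨h, _, _⟩ => G.irrefl h⟩

/-- The whisker graph `W(H)`: each vertex `x` (as `Sum.inl x`) gets a pendant
whisker vertex `Sum.inr x`. -/
def whisker (H : SimpleGraph V) : SimpleGraph (V ⊕ V) where
  Adj x y :=
    (∃ a b, x = Sum.inl a ∧ y = Sum.inl b ∧ H.Adj a b) ∨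
    (∃ a, (x = Sum.inl a ∧ y = Sum.inr a) ∨ (x = Sum.inr a ∧ y = Sum.inl a))
  symm := by
    constructor
    rintro x y (⟨a, b, hx, hy, hab⟩ | ⟨a, h | h⟩)
    · exact Or.inl ⟨b, a, hy, hx, hab.symm⟩
    · exact Or.inr ⟨a, Or.inr ⟨h.2, h.1⟩⟩
    · exact Or.inr ⟨a, Or.inl ⟨h.2, h.1⟩⟩
  loopless := by
    constructor
    rintro x (⟨a, b, hx, hy, hab⟩ | ⟨a, ⟨h1, h2⟩ | ⟨h1, h2⟩⟩)
    · obtain rfl := Sum.inl_injective (hx ▸ hy : (Sum.inl a : V ⊕ V) = Sum.inl b)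
      exact H.irrefl hab
    · exact Sum.inl_ne_inr (h1 ▸ h2 : (Sum.inl a : V ⊕ V) = Sum.inr a)
    · exact Sum.inr_ne_inl (h1 ▸ h2 : (Sum.inr a : V ⊕ V) = Sum.inl a)

/-- Shellability of the complex with face predicate `faces`: there is a linear
order `F 0, F 1, …` of all facets such that each facet meets the union of the
previous ones in a pure subcomplex of codimension one. -/
def Shellable (faces : Finset V → Prop) : Prop :=
  ∃ (t : ℕ) (F : Fin t → Finset V),
    (∀ i, IsFacet faces (F i)) ∧
    (∀ F', IsFacet faces F' → ∃ i, F' = F i) ∧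
    Function.Injective F ∧
    ∀ k : Fin t, 0 < (k : ℕ) → ∀ σ : Finset V, σ ⊆ F k →
      (∃ i, i < k ∧ σ ⊆ F i) →
      ∃ τ : Finset V, σ ⊆ τ ∧ τ ⊆ F k ∧ (∃ i, i < k ∧ τ ⊆ F i) ∧
        τ.card = (F k).card - 1

/-- Vertex decomposability of the complex with face predicate `faces`. -/
inductive VertexDecomposable [DecidableEq V] : (Finset V → Prop) → Prop
  | simplex (faces : Finset V → Prop) (F : Finset V)
      (h : ∀ F', faces F' ↔ F' ⊆ F) : VertexDecomposable faces
  | shed (faces : Finset V → Prop) (v : V)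
      (hdel : VertexDecomposable (fun F => faces F ∧ v ∉ F))
      (hlink : VertexDecomposable (fun F => v ∉ F ∧ faces (insert v F)))
      (hshed : ∀ F, v ∉ F → faces (insert v F) →
        ¬ IsFacet (fun F' => faces F' ∧ v ∉ F') F) :
      VertexDecomposable faces

/-!
Let `D` be the set of `a` with both `x_a, y_a ∈ F` and `U` the set of `a` with only `x_a ∈ F`.
A maximum matching of `W(H)[F]` consists of the whiskers over `D` and a maximum matching of
`H[U]`, so `ν(W(H)[F]) = |D| + ν(H[U])`. If `F` is a facet, every `a` has `x_a` or `y_a` in `F`,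
so `|F| = n + |D|`; adding one vertex raises `ν` by at most one, so `ν(W(H)[F]) = q - 1`; and
adding `y_j` for `j ∈ U` shows that every vertex of `U` is missed by some maximum matching of
`H[U]`. In a bipartite graph no edge joins two such vertices, so `ν(H[U]) = 0` and `|D| = q - 1`.
-/

open Finset

namespace SimpleGraph

variable {G : SimpleGraph V}

theorem Walk.exists_isPath_or_exists_odd_isCycle [DecidableEq V] {a b : V} (p : G.Walk a b) :
    (∃ q : G.Walk a b, q.IsPath ∧ Even (q.length + p.length)) ∨
      ∃ (x : V) (c : G.Walk x x), c.IsCycle ∧ Odd c.length := by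
  induction p with
  | nil => exact Or.inl ⟨nil, .nil, by simp⟩
  | @cons a a' b h p ih =>
    obtain ⟨q, hq, hpar⟩ | hcycle := ih
    · by_cases ha : a ∈ q.support
      · have hsplit := congrArg length (q.take_spec ha)
        rw [length_append] at hsplit
        by_cases hev : Even ((q.takeUntil a ha).length + 1)
        · refine Or.inl ⟨q.dropUntil a ha, hq.dropUntil ha, ?_⟩
          rw [length_cons]
          simp only [Nat.even_iff] at *
          omega
        · have hne : (q.takeUntil a ha).length ≠ 0 := fun h0 =>
            G.loopless.irrefl _ (eq_of_length_eq_zero h0 ▸ h)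
          refine Or.inr ⟨a, cons h (q.takeUntil a ha), ?_, Nat.not_even_iff_odd.mp hev⟩
          refine isCycle_iff_isPath_tail_and_le_length.mpr ⟨by simpa using hq.takeUntil ha, ?_⟩
          rw [length_cons]
          simp only [Nat.even_iff] at hev
          omega
      · refine Or.inl ⟨cons h q, hq.cons ha, ?_⟩
        simp only [length_cons, Nat.even_iff] at *
        omega
    · exact Or.inr hcycle

theorem isBipartite_of_forall_isCycle_not_odd
    (h : ∀ (v : V) (c : G.Walk v v), c.IsCycle → ¬ Odd c.length) : G.IsBipartite := by
  classical
  refine two_colorable_iff_forall_loop_even.mpr fun u w => ?_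
  obtain ⟨q, hq, hpar⟩ | ⟨x, c, hc, hodd⟩ := w.exists_isPath_or_exists_odd_isCycle
  · simpa [(Walk.isPath_iff_nil.mp hq).length_eq_zero] using hpar
  · exact absurd hodd (h x c hc)

end SimpleGraph

section Matching

variable {W : Type*} {G G' : SimpleGraph V} {F F' : Finset V} {M N : Finset (Sym2 V)}
  {e e' : Sym2 V} {u v x y : V}

lemma isMatchingOn_empty : IsMatchingOn G F ∅ := by
  simp [IsMatchingOn]

lemma IsMatchingOn.subset (h : IsMatchingOn G F M) (hNM : N ⊆ M) : IsMatchingOn G F N :=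
  ⟨fun e he => h.1 e (hNM he), fun e he => h.2.1 e (hNM he),
    fun e he e' he' => h.2.2 e (hNM he) e' (hNM he')⟩

lemma IsMatchingOn.restrict (h : IsMatchingOn G F M) (hF' : ∀ e ∈ M, ∀ v ∈ e, v ∈ F') :
    IsMatchingOn G F' M :=
  ⟨h.1, hF', h.2.2⟩

lemma IsMatchingOn.mono (h : IsMatchingOn G F M) (hF : F ⊆ F') : IsMatchingOn G F' M :=
  h.restrict fun e he v hv => hF (h.2.1 e he v hv)

lemma IsMatchingOn.of_forall_mem_edgeSet (h : IsMatchingOn G F M)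
    (hG' : ∀ e ∈ M, e ∈ G'.edgeSet) : IsMatchingOn G' F M :=
  ⟨hG', h.2.1, h.2.2⟩

lemma IsMatchingOn.mono_graph (h : IsMatchingOn G F M) (hG : G ≤ G') : IsMatchingOn G' F M :=
  h.of_forall_mem_edgeSet fun e he => SimpleGraph.edgeSet_mono hG (h.1 e he)

lemma IsMatchingOn.eq_of_mem (h : IsMatchingOn G F M) (he : e ∈ M) (he' : e' ∈ M)
    (hv : v ∈ e) (hv' : v ∈ e') : e = e' := by
  by_contra hne
  exact h.2.2 e he e' he' hne v hv hv'

lemma IsMatchingOn.notMem_mSupp (h : IsMatchingOn G F M) (hv : v ∉ F) : v ∉ mSupp M :=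
  fun ⟨e, he, hve⟩ => hv (h.2.1 e he v hve)

lemma IsMatchingOn.notMem_mSupp_erase [DecidableEq V] (h : IsMatchingOn G F M) (he : e ∈ M)
    (hv : v ∈ e) : v ∉ mSupp (M.erase e) := by
  rintro ⟨e', he', hv'⟩
  exact (mem_erase.mp he').1 (h.eq_of_mem (mem_erase.mp he').2 he hv' hv)

lemma notMem_mSupp_insert [DecidableEq V] (hv : v ∉ e) (hvM : v ∉ mSupp M) :
    v ∉ mSupp (insert e M) := by
  rintro ⟨e', he', hv'⟩
  rcases mem_insert.mp he' with rfl | he'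
  exacts [hv hv', hvM ⟨e', he', hv'⟩]

lemma card_insert_of_notMem_mSupp [DecidableEq V] (hx : x ∉ mSupp M) :
    #(insert s(x, y) M) = #M + 1 :=
  card_insert_of_notMem fun h => hx ⟨_, h, Sym2.mem_mk_left x y⟩

lemma IsMatchingOn.insert [DecidableEq V] (h : IsMatchingOn G F M) (hxy : G.Adj x y)
    (hx : x ∈ F) (hy : y ∈ F) (hxM : x ∉ mSupp M) (hyM : y ∉ mSupp M) :
    IsMatchingOn G F (insert s(x, y) M) := by
  have hfree : ∀ v ∈ s(x, y), v ∉ mSupp M := by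
    intro v hv
    rcases Sym2.mem_iff.mp hv with rfl | rfl <;> assumption
  refine ⟨?_, ?_, ?_⟩
  · simpa [forall_mem_insert] using ⟨hxy, h.1⟩
  · simpa [forall_mem_insert] using ⟨⟨hx, hy⟩, h.2.1⟩
  · intro e he e' he' hne v hv hv'
    rcases mem_insert.mp he with rfl | he <;> rcases mem_insert.mp he' with rfl | he'
    · exact hne rfl
    · exact hfree v hv ⟨e', he', hv'⟩
    · exact hfree v hv' ⟨e, he, hv⟩
    · exact h.2.2 e he e' he' hne v hv hv'

lemma IsMatchingOn.union [DecidableEq V] (h₁ : IsMatchingOn G F M) (h₂ : IsMatchingOn G F N)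
    (hMN : ∀ e ∈ M, ∀ e' ∈ N, ∀ v ∈ e, v ∉ e') : IsMatchingOn G F (M ∪ N) := by
  refine ⟨fun e he => ?_, fun e he => ?_, ?_⟩
  · rcases mem_union.mp he with he | he
    exacts [h₁.1 e he, h₂.1 e he]
  · rcases mem_union.mp he with he | he
    exacts [h₁.2.1 e he, h₂.2.1 e he]
  · intro e he e' he' hne v hv hv'
    rcases mem_union.mp he with he | he <;> rcases mem_union.mp he' with he' | he'
    exacts [h₁.2.2 e he e' he' hne v hv hv', hMN e he e' he' v hv hv',
      hMN e' he' e he v hv' hv, h₂.2.2 e he e' he' hne v hv hv']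

lemma IsMatchingOn.card_filter_mem_le_one [DecidableEq V] (h : IsMatchingOn G F M) (v : V) :
    #(M.filter (v ∈ ·)) ≤ 1 :=
  card_le_one.mpr fun _ he _ he' =>
    h.eq_of_mem (mem_filter.mp he).1 (mem_filter.mp he').1 (mem_filter.mp he).2
      (mem_filter.mp he').2

lemma IsMatchingOn.card_filter_le [DecidableEq V] (h : IsMatchingOn G F M) (S : Finset V) :
    #(M.filter fun e => ∃ v ∈ S, v ∈ e) ≤ #S :=
  calc #(M.filter fun e => ∃ v ∈ S, v ∈ e)
      _ ≤ #(S.biUnion fun v => M.filter (v ∈ ·)) :=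
        card_le_card fun e he => by
          obtain ⟨heM, v, hv, hve⟩ := mem_filter.mp he
          exact mem_biUnion.mpr ⟨v, hv, mem_filter.mpr ⟨heM, hve⟩⟩
      _ ≤ ∑ v ∈ S, #(M.filter (v ∈ ·)) := card_biUnion_le
      _ ≤ ∑ _v ∈ S, 1 := sum_le_sum fun v _ => h.card_filter_mem_le_one v
      _ = #S := by simp

lemma IsMatchingOn.card_le [DecidableEq V] (h : IsMatchingOn G F M) : #M ≤ #F := by
  calc #M = #(M.filter fun e => ∃ v ∈ F, v ∈ e) := by
        rw [filter_true_of_mem fun e he =>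
          ⟨e.out.1, h.2.1 e he _ (Sym2.out_fst_mem e), Sym2.out_fst_mem e⟩]
    _ ≤ #F := h.card_filter_le F

lemma IsMatchingOn.erase_of_sup_edge [DecidableEq V] (h : IsMatchingOn (G ⊔ .edge u v) F M) :
    IsMatchingOn G F (M.erase s(u, v)) := by
  refine (h.subset (erase_subset _ _)).of_forall_mem_edgeSet fun e he => ?_
  obtain ⟨hne, he⟩ := mem_erase.mp he
  rcases SimpleGraph.edgeSet_sup _ _ ▸ h.1 e he with he | he
  · exact he
  · exact absurd (SimpleGraph.edgeSet_edge_subset he) hne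

lemma IsMatchingOn.map [DecidableEq W] {G' : SimpleGraph W} (f : G ↪g G')
    (h : IsMatchingOn G F M) : IsMatchingOn G' (F.map f.toEmbedding) (M.image (Sym2.map f)) := by
  refine ⟨?_, ?_, ?_⟩
  · simpa [forall_mem_image, f.map_mem_edgeSet_iff] using h.1
  · simp only [forall_mem_image, Sym2.mem_map, mem_map]
    rintro e he _ ⟨a, ha, rfl⟩
    exact ⟨a, h.2.1 e he a ha, rfl⟩
  · simp only [forall_mem_image, Sym2.mem_map]
    rintro e he e' he' hne _ ⟨a, ha, rfl⟩ ⟨b, hb, hab⟩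
    exact h.2.2 e he e' he' (fun h => hne (h ▸ rfl)) a ha (f.injective hab ▸ hb)

lemma IsMatchingOn.comap [DecidableEq V] {G' : SimpleGraph W} {F' : Finset W} {M' : Finset (Sym2 W)}
    (f : G ↪g G') (h : IsMatchingOn G' F' M') (S : Finset V) :
    IsMatchingOn G S ((M'.preimage (Sym2.map f)
      (Sym2.map.injective f.injective).injOn).filter (· ∈ S.sym2)) := by
  simp only [IsMatchingOn, mem_filter, mem_preimage, mem_sym2_iff]
  refine ⟨fun e he => f.map_mem_edgeSet_iff.mp (h.1 _ he.1), fun e he => he.2, ?_⟩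
  intro e he e' he' hne v hv hv'
  exact h.2.2 _ he.1 _ he'.1 (fun h => hne (Sym2.map.injective f.injective h)) (f v)
    (Sym2.mem_map.mpr ⟨v, hv, rfl⟩) (Sym2.mem_map.mpr ⟨v, hv', rfl⟩)

end Matching

section MatchingNumber

variable {G : SimpleGraph V} {F : Finset V} {M : Finset (Sym2 V)} {k q : ℕ}

/-- `ν(G[F])`. -/
noncomputable def matchingNumOn (G : SimpleGraph V) (F : Finset V) : ℕ :=
  sSup {k | ∃ M, IsMatchingOn G F M ∧ #M = k}

lemma le_matchingNumOn_iff [DecidableEq V] :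
    k ≤ matchingNumOn G F ↔ ∃ M, IsMatchingOn G F M ∧ #M = k := by
  have hbdd : BddAbove {k | ∃ M, IsMatchingOn G F M ∧ #M = k} :=
    ⟨#F, by rintro _ ⟨M, hM, rfl⟩; exact hM.card_le⟩
  refine ⟨fun hk => ?_, fun ⟨M, hM, hk⟩ => le_csSup hbdd ⟨M, hM, hk⟩⟩
  obtain ⟨M, hM, hcard⟩ := Nat.sSup_mem (s := {k | ∃ M, IsMatchingOn G F M ∧ #M = k})
    ⟨0, ∅, isMatchingOn_empty, card_empty⟩ hbdd
  obtain ⟨N, hNM, rfl⟩ := exists_subset_card_eq (hk.trans_eq hcard.symm)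
  exact ⟨N, hM.subset hNM, rfl⟩

lemma IsMatchingOn.card_le_matchingNumOn [DecidableEq V] (h : IsMatchingOn G F M) :
    #M ≤ matchingNumOn G F :=
  le_matchingNumOn_iff.mpr ⟨M, h, rfl⟩

lemma exists_isMatchingOn_card_eq_matchingNumOn [DecidableEq V] (G : SimpleGraph V)
    (F : Finset V) : ∃ M, IsMatchingOn G F M ∧ #M = matchingNumOn G F :=
  le_matchingNumOn_iff.mp le_rfl

lemma mfFace_iff_matchingNumOn_lt [DecidableEq V] : MFFace G q F ↔ matchingNumOn G F < q := by
  rw [MFFace, ← le_matchingNumOn_iff, not_le]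

lemma IsFacet.le_matchingNumOn_insert [DecidableEq V] (hF : IsFacet (MFFace G q) F) {x : V}
    (hx : x ∉ F) : q ≤ matchingNumOn G (insert x F) := by
  by_contra! h
  exact hx (hF.2 _ (mfFace_iff_matchingNumOn_lt.mpr h) (subset_insert x F) ▸ mem_insert_self x F)

lemma matchingNumOn_insert_le [DecidableEq V] (x : V) :
    matchingNumOn G (insert x F) ≤ matchingNumOn G F + 1 := by
  obtain ⟨M, hM, hcard⟩ := exists_isMatchingOn_card_eq_matchingNumOn G (insert x F)
  have hN : IsMatchingOn G F (M.filter (x ∉ ·)) := by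
    refine (hM.subset (filter_subset _ _)).restrict fun e he v hv => ?_
    obtain ⟨heM, hxe⟩ := mem_filter.mp he
    exact (mem_insert.mp (hM.2.1 e heM v hv)).resolve_left (by rintro rfl; exact hxe hv)
  rw [← hcard, ← card_filter_add_card_filter_not (x ∉ ·)]
  simp only [not_not]
  exact add_le_add hN.card_le_matchingNumOn (hM.card_filter_mem_le_one x)

end MatchingNumber

section Bipartite

variable {H : SimpleGraph V} {U : Finset V} {M M₁ M₂ : Finset (Sym2 V)} {k t : ℕ}

lemma IsMatchingOn.mem_mSupp_of_adj [DecidableEq V] (h : IsMatchingOn H U M)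
    (hmax : ∀ N, IsMatchingOn H U N → #N ≤ #M) {u v : V} (huv : H.Adj u v) (hu : u ∈ U)
    (hv : v ∈ U) (huM : u ∉ mSupp M) : v ∈ mSupp M := by
  by_contra hvM
  have := hmax _ (h.insert huv hu hv huM hvM)
  rw [card_insert_of_notMem_mSupp huM] at this
  omega

/-- A matching through the new edge `uz` lifts back by trading `uz` for `uv` and `wz`;
any other matching lifts by adding `vw`. -/
lemma card_le_of_isMatchingOn_sup_edge [DecidableEq V]
    (hmax : ∀ N, IsMatchingOn H U N → #N ≤ k + 1) {u v w z : V}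
    (huv : H.Adj u v) (hvw : H.Adj v w) (hwz : H.Adj w z) (hv : v ∈ U) (hw : w ∈ U)
    (huw : u ≠ w) (hzv : z ≠ v) (huz : u ≠ z) {N : Finset (Sym2 V)}
    (hN : IsMatchingOn (H ⊔ .edge u z) ((U.erase v).erase w) N) : #N ≤ k := by
  have hN₀ := hN.erase_of_sup_edge.mono ((erase_subset _ _).trans (erase_subset _ _))
  have hvN₀ : v ∉ mSupp (N.erase s(u, z)) :=
    hN.erase_of_sup_edge.notMem_mSupp (by simp)
  have hwN₀ : w ∉ mSupp (N.erase s(u, z)) :=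
    hN.erase_of_sup_edge.notMem_mSupp (by simp)
  by_cases huzN : s(u, z) ∈ N
  · have hU : ∀ x ∈ s(u, z), x ∈ U := fun x hx =>
      mem_of_mem_erase (mem_of_mem_erase (hN.2.1 _ huzN x hx))
    have hN₁ := hN₀.insert huv (hU u (Sym2.mem_mk_left u z)) hv
      (hN.notMem_mSupp_erase huzN (Sym2.mem_mk_left u z)) hvN₀
    have hwN₁ : w ∉ mSupp (insert s(u, v) (N.erase s(u, z))) :=
      notMem_mSupp_insert (by simp [huw.symm, hvw.ne.symm]) hwN₀
    have hN₂ := hN₁.insert hwz hw (hU z (Sym2.mem_mk_right u z)) hwN₁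
      (notMem_mSupp_insert (by simp [huz.symm, hzv])
        (hN.notMem_mSupp_erase huzN (Sym2.mem_mk_right u z)))
    have := hmax _ hN₂
    rw [card_insert_of_notMem_mSupp hwN₁,
      card_insert_of_notMem_mSupp (hN.notMem_mSupp_erase huzN (Sym2.mem_mk_left u z)),
      card_erase_of_mem huzN] at this
    omega
  · rw [erase_eq_of_notMem huzN] at hN₀ hvN₀ hwN₀
    have := hmax _ (hN₀.insert hvw hv hw hvN₀ hwN₀)
    rw [card_insert_of_notMem_mSupp hvN₀] at this
    omega

theorem SimpleGraph.IsBipartite.mem_mSupp_of_adj [DecidableEq V] (hH : H.IsBipartite)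
    (hmax : ∀ N, IsMatchingOn H U N → #N ≤ t) (h₁ : IsMatchingOn H U M₁)
    (h₂ : IsMatchingOn H U M₂) (c₁ : #M₁ = t) (c₂ : #M₂ = t) {u v : V} (huv : H.Adj u v)
    (hu : u ∈ U) (hv : v ∈ U) (hu₁ : u ∉ mSupp M₁) : v ∈ mSupp M₂ := by
  induction t generalizing H U M₁ M₂ u v with
  | zero =>
    obtain ⟨e, he, -⟩ := h₁.mem_mSupp_of_adj (c₁ ▸ hmax) huv hu hv hu₁
    simp [card_eq_zero.mp c₁] at he
  | succ k ih =>
    by_contra hv₂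
    obtain ⟨w, hvw⟩ : ∃ w, s(v, w) ∈ M₁ := by
      obtain ⟨e, he, hve⟩ := h₁.mem_mSupp_of_adj (c₁ ▸ hmax) huv hu hv hu₁
      obtain ⟨w, rfl⟩ := Sym2.mem_iff_exists.mp hve
      exact ⟨w, he⟩
    have hadj_vw : H.Adj v w := h₁.1 _ hvw
    have hw : w ∈ U := h₁.2.1 _ hvw w (Sym2.mem_mk_right v w)
    obtain ⟨z, hwz⟩ : ∃ z, s(w, z) ∈ M₂ := by
      obtain ⟨e, he, hwe⟩ := h₂.mem_mSupp_of_adj (c₂ ▸ hmax) hadj_vw hv hw hv₂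
      obtain ⟨z, rfl⟩ := Sym2.mem_iff_exists.mp hwe
      exact ⟨z, he⟩
    have hadj_wz : H.Adj w z := h₂.1 _ hwz
    have hz : z ∈ U := h₂.2.1 _ hwz z (Sym2.mem_mk_right w z)
    obtain ⟨c⟩ := hH
    have hcuz : c u ≠ c z := by
      have key : ∀ a b d e : Fin 2, a ≠ b → b ≠ d → d ≠ e → a ≠ e := by decide
      exact key _ _ _ _ (c.valid huv) (c.valid hadj_vw) (c.valid hadj_wz)
    have huw : u ≠ w := fun h => hu₁ ⟨_, hvw, h ▸ Sym2.mem_mk_right v w⟩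
    have hzv : z ≠ v := fun h => hv₂ ⟨_, hwz, h ▸ Sym2.mem_mk_right w z⟩
    have huz : u ≠ z := fun h => hcuz (congrArg c h)
    -- Shortcut the path `u v w z` by the edge `uz` and delete `v`, `w`: the graph stays
    -- bipartite, the matching number drops by one, and `M₁ - vw`, `M₂ - wz` miss `u`, `z`.
    have hH' : (H ⊔ .edge u z).IsBipartite := ⟨.mk c fun {a b} hab => by
      rw [SimpleGraph.sup_adj, SimpleGraph.edge_adj] at hab
      rcases hab with hab | ⟨⟨rfl, rfl⟩ | ⟨rfl, rfl⟩, -⟩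
      exacts [c.valid hab, hcuz, hcuz.symm]⟩
    have h₁' : IsMatchingOn (H ⊔ .edge u z) ((U.erase v).erase w) (M₁.erase s(v, w)) := by
      refine ((h₁.subset (erase_subset _ _)).mono_graph le_sup_left).restrict fun e he x hx => ?_
      simp only [mem_erase]
      refine ⟨fun h => ?_, fun h => ?_, h₁.2.1 e (mem_of_mem_erase he) x hx⟩
      · exact h₁.notMem_mSupp_erase hvw (Sym2.mem_mk_right v w) ⟨e, he, h ▸ hx⟩
      · exact h₁.notMem_mSupp_erase hvw (Sym2.mem_mk_left v w) ⟨e, he, h ▸ hx⟩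
    have h₂' : IsMatchingOn (H ⊔ .edge u z) ((U.erase v).erase w) (M₂.erase s(w, z)) := by
      refine ((h₂.subset (erase_subset _ _)).mono_graph le_sup_left).restrict fun e he x hx => ?_
      simp only [mem_erase]
      refine ⟨fun h => ?_, fun h => ?_, h₂.2.1 e (mem_of_mem_erase he) x hx⟩
      · exact h₂.notMem_mSupp_erase hwz (Sym2.mem_mk_left w z) ⟨e, he, h ▸ hx⟩
      · exact hv₂ ⟨e, mem_of_mem_erase he, h ▸ hx⟩
    have huz' : (H ⊔ .edge u z).Adj u z := .inr (by simp [SimpleGraph.edge_adj, huz])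
    have hu' : u ∈ (U.erase v).erase w := by simp [huw, huv.ne, hu]
    have hz' : z ∈ (U.erase v).erase w := by simp [hadj_wz.ne.symm, hzv, hz]
    have hz₂ : z ∈ mSupp (M₂.erase s(w, z)) := ih hH'
      (fun N hN => card_le_of_isMatchingOn_sup_edge hmax huv hadj_vw hadj_wz hv hw huw hzv huz hN)
      h₁' h₂' (by simp [card_erase_of_mem hvw, c₁]) (by simp [card_erase_of_mem hwz, c₂])
      huz' hu' hz' fun ⟨e, he, hue⟩ => hu₁ ⟨e, mem_of_mem_erase he, hue⟩
    exact h₂.notMem_mSupp_erase hwz (Sym2.mem_mk_right w z) hz₂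

theorem SimpleGraph.IsBipartite.matchingNumOn_eq_zero [DecidableEq V] (hH : H.IsBipartite)
    (hU : ∀ j ∈ U, matchingNumOn H U ≤ matchingNumOn H (U.erase j)) :
    matchingNumOn H U = 0 := by
  have hmiss : ∀ j ∈ U,
      ∃ M, IsMatchingOn H U M ∧ #M = matchingNumOn H U ∧ j ∉ mSupp M := by
    intro j hj
    obtain ⟨M, hM, hcard⟩ := le_matchingNumOn_iff.mp (hU j hj)
    exact ⟨M, hM.mono (erase_subset j U), hcard, hM.notMem_mSupp (notMem_erase j U)⟩
  by_contra h
  obtain ⟨M, hM, hcard⟩ := exists_isMatchingOn_card_eq_matchingNumOn H U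
  obtain ⟨e, he⟩ := card_pos.mp (hcard ▸ Nat.pos_of_ne_zero h)
  induction e using Sym2.ind with | _ a b =>
  have ha := hM.2.1 _ he a (Sym2.mem_mk_left a b)
  have hb := hM.2.1 _ he b (Sym2.mem_mk_right a b)
  obtain ⟨Ma, hMa, ca, haMa⟩ := hmiss a ha
  obtain ⟨Mb, hMb, cb, hbMb⟩ := hmiss b hb
  exact hbMb (hH.mem_mSupp_of_adj (fun N hN => hN.card_le_matchingNumOn) hMa hMb ca cb
    (hM.1 _ he) ha hb haMa)

end Bipartite

section Whisker

variable {H : SimpleGraph V}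

@[simp]
lemma whisker_adj_inl_inl {a b : V} : (whisker H).Adj (.inl a) (.inl b) ↔ H.Adj a b := by
  simp [whisker]

@[simp]
lemma whisker_adj_inl_inr {a b : V} : (whisker H).Adj (.inl a) (.inr b) ↔ a = b := by
  simp [whisker, eq_comm]

@[simp]
lemma whisker_adj_inr_inl {a b : V} : (whisker H).Adj (.inr a) (.inl b) ↔ a = b := by
  simp [whisker, eq_comm]

@[simp]
lemma whisker_not_adj_inr_inr {a b : V} : ¬ (whisker H).Adj (.inr a) (.inr b) := by
  simp [whisker]

def whiskerEmbedding (H : SimpleGraph V) : H ↪g whisker H where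
  toEmbedding := .inl
  map_rel_iff' := whisker_adj_inl_inl

lemma le_matchingNumOn_whisker [DecidableEq V] (F : Finset (V ⊕ V)) :
    matchingNumOn H (F.toLeft \ F.toRight) + #(F.toLeft ∩ F.toRight) ≤
      matchingNumOn (whisker H) F := by
  obtain ⟨M, hM, hcard⟩ := exists_isMatchingOn_card_eq_matchingNumOn H (F.toLeft \ F.toRight)
  set P := (F.toLeft ∩ F.toRight).image fun a => s(.inl a, (.inr a : V ⊕ V))
  have hMF : IsMatchingOn (whisker H) F (M.image (Sym2.map Sum.inl)) := by
    refine (hM.map (whiskerEmbedding H)).mono fun x hx => ?_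
    obtain ⟨a, ha, rfl⟩ := mem_map.mp hx
    exact mem_toLeft.mp (mem_sdiff.mp ha).1
  have hP : IsMatchingOn (whisker H) F P := by
    refine ⟨?_, ?_, ?_⟩ <;> simp only [P, forall_mem_image]
    · intro a _
      simp
    · intro a ha x hx
      rcases Sym2.mem_iff.mp hx with rfl | rfl
      exacts [mem_toLeft.mp (mem_inter.mp ha).1, mem_toRight.mp (mem_inter.mp ha).2]
    · intro a _ b _ hab x hxa hxb
      rcases Sym2.mem_iff.mp hxa with rfl | rfl <;> rcases Sym2.mem_iff.mp hxb with h | h <;>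
        simp_all
  have hdisj : ∀ e ∈ M.image (Sym2.map Sum.inl), ∀ e' ∈ P, ∀ x ∈ e, x ∉ e' := by
    simp only [P, forall_mem_image, Sym2.mem_map, Sym2.mem_iff]
    rintro e he b hb _ ⟨a, ha, rfl⟩ (h | h)
    · obtain rfl := Sum.inl_injective h
      exact (mem_sdiff.mp (hM.2.1 e he a ha)).2 (mem_inter.mp hb).2
    · exact Sum.inl_ne_inr h
  have hcardP : #P = #(F.toLeft ∩ F.toRight) :=
    card_image_of_injective _ fun a b h => by simpa using h
  rw [← hcard, ← card_image_of_injective M (Sym2.map.injective (Sum.inl_injective (β := V))),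
    ← hcardP,
    ← card_union_of_disjoint (disjoint_left.mpr fun e he heP =>
      hdisj e he e heP _ (Sym2.out_fst_mem e) (Sym2.out_fst_mem e))]
  exact (hMF.union hP hdisj).card_le_matchingNumOn

lemma matchingNumOn_whisker_le [DecidableEq V] (F : Finset (V ⊕ V)) :
    matchingNumOn (whisker H) F ≤
      matchingNumOn H (F.toLeft \ F.toRight) + #(F.toLeft ∩ F.toRight) := by
  obtain ⟨M, hM, hcard⟩ := exists_isMatchingOn_card_eq_matchingNumOn (whisker H) F
  set U := F.toLeft \ F.toRight
  set D := F.toLeft ∩ F.toRight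
  have hM' := hM.comap (whiskerEmbedding H) U
  set M' := (M.preimage (Sym2.map (whiskerEmbedding H))
    (Sym2.map.injective (whiskerEmbedding H).injective).injOn).filter (· ∈ U.sym2)
  have hcover :
      M ⊆ M'.image (Sym2.map Sum.inl) ∪ M.filter fun e => ∃ x ∈ D.map .inl, x ∈ e := by
    intro e he
    have hF := hM.2.1 e he
    induction e using Sym2.ind with | _ x y =>
    have hadj : (whisker H).Adj x y := hM.1 _ he
    rw [mem_union, mem_filter]
    rcases x with a | a <;> rcases y with b | b
    · by_cases hD : a ∈ D ∨ b ∈ D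
      · refine .inr ⟨he, ?_⟩
        rcases hD with hD | hD
        exacts [⟨_, mem_map_of_mem _ hD, Sym2.mem_mk_left _ _⟩,
          ⟨_, mem_map_of_mem _ hD, Sym2.mem_mk_right _ _⟩]
      · refine .inl (mem_image.mpr
          ⟨s(a, b), mem_filter.mpr ⟨mem_preimage.mpr he, ?_⟩, rfl⟩)
        simp_all [U, D]
    · obtain rfl : a = b := whisker_adj_inl_inr.mp hadj
      refine .inr ⟨he, _, mem_map_of_mem _ (?_ : a ∈ D), Sym2.mem_mk_left _ _⟩
      simp_all [D]
    · obtain rfl : a = b := whisker_adj_inr_inl.mp hadj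
      refine .inr ⟨he, _, mem_map_of_mem _ (?_ : a ∈ D), Sym2.mem_mk_right _ _⟩
      simp_all [D]
    · exact absurd hadj whisker_not_adj_inr_inr
  rw [← hcard]
  calc #M ≤ #(M'.image (Sym2.map Sum.inl)) + #(M.filter fun e => ∃ x ∈ D.map .inl, x ∈ e) :=
        (card_le_card hcover).trans (card_union_le _ _)
    _ ≤ matchingNumOn H U + #(D.map .inl) :=
        add_le_add (card_image_le.trans hM'.card_le_matchingNumOn) (hM.card_filter_le _)
    _ = matchingNumOn H U + #D := by rw [card_map]

theorem matchingNumOn_whisker [DecidableEq V] (F : Finset (V ⊕ V)) :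
    matchingNumOn (whisker H) F =
      matchingNumOn H (F.toLeft \ F.toRight) + #(F.toLeft ∩ F.toRight) :=
  (matchingNumOn_whisker_le F).antisymm (le_matchingNumOn_whisker F)

end Whisker

theorem mfComplex_pure_of_bipartite_general
    {V : Type*} [Fintype V] [DecidableEq V] (H : SimpleGraph V)
    (hbip : ∀ (v : V) (w : H.Walk v v), w.IsCycle → ¬ Odd w.length)
    (n : ℕ) (hn : Fintype.card V = n) (ν q : ℕ)
    (hν₁ : ∃ M : Finset (Sym2 (V ⊕ V)),
      IsMatchingOn (whisker H) Finset.univ M ∧ M.card = ν)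
    (hqν : q ≤ ν) :
    ∀ F : Finset (V ⊕ V), IsFacet (MFFace (whisker H) q) F →
      F.card = n + q - 1 := by
  intro F hF
  have hface := mfFace_iff_matchingNumOn_lt.mp hF.1
  obtain ⟨x, hx⟩ : ∃ x, x ∉ F := by
    by_contra! hall
    obtain ⟨M, hM, rfl⟩ := hν₁
    rw [eq_univ_of_forall hall] at hface
    exact absurd (hqν.trans hM.card_le_matchingNumOn) hface.not_ge
  have hνF : matchingNumOn (whisker H) F + 1 = q :=
    le_antisymm hface ((hF.le_matchingNumOn_insert hx).trans (matchingNumOn_insert_le x))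
  rw [matchingNumOn_whisker] at hface hνF
  have hcover : F.toLeft ∪ F.toRight = univ := by
    refine eq_univ_of_forall fun a => mem_union.mpr (or_iff_not_and_not.mpr fun ⟨hl, hr⟩ => ?_)
    have := hF.le_matchingNumOn_insert (mem_toRight.not.mp hr)
    rw [matchingNumOn_whisker, toLeft_insert_inr, toRight_insert_inr, sdiff_insert_of_notMem hl,
      inter_insert_of_notMem hl] at this
    omega
  have hU : matchingNumOn H (F.toLeft \ F.toRight) = 0 := by
    refine (SimpleGraph.isBipartite_of_forall_isCycle_not_odd hbip).matchingNumOn_eq_zero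
      fun j hj => ?_
    obtain ⟨hl, hr⟩ := mem_sdiff.mp hj
    have := hF.le_matchingNumOn_insert (mem_toRight.not.mp hr)
    rw [matchingNumOn_whisker, toLeft_insert_inr, toRight_insert_inr, sdiff_insert,
      inter_insert_of_mem hl, card_insert_of_notMem fun h => hr (mem_inter.mp h).2] at this
    omega
  rw [← card_toLeft_add_card_toRight, ← card_union_add_card_inter, hcover, card_univ, hn]
  omega

/-- if `H` has no odd cycle (is bipartite), then for `1 ≤ q ≤ ν(G)`
the complex `MF^q(W(H))` is pure: every facet has cardinality `n + q - 1`. -/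
theorem mfComplex_pure_of_bipartite
    {V : Type*} [Fintype V] [DecidableEq V] (H : SimpleGraph V)
    (hbip : ∀ (v : V) (w : H.Walk v v), w.IsCycle → ¬ Odd w.length)
    (n : ℕ) (hn : Fintype.card V = n) (ν q : ℕ)
    (hν₁ : ∃ M : Finset (Sym2 (V ⊕ V)),
      IsMatchingOn (whisker H) Finset.univ M ∧ M.card = ν)
    (hν₂ : ∀ M : Finset (Sym2 (V ⊕ V)),
      IsMatchingOn (whisker H) Finset.univ M → M.card ≤ ν)
    (hq : 1 ≤ q) (hqν : q ≤ ν) :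
    ∀ F : Finset (V ⊕ V), IsFacet (MFFace (whisker H) q) F →
      F.card = n + q - 1 :=
  mfComplex_pure_of_bipartite_general H hbip n hn ν q hν₁ hqν
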